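/- arXiv:2203.13996 — 2 statements merged into one kernel-verified Lean document; each statement's English description precedes it below -/
import Mathlib

section
/- Let s ≥ 2 be an integer and let a be a complex number with 0 < |a| < 1. Then the Hurwitz zeta value admits the expansion ζ(s;a) = 1/a^s + ∑_{i=1}^∞ (−1)^{i−1} C(i+s−2, i−1) ζ(i+s−1) a^{i−1}, the series on the right being convergent; here C(n,r) denotes the binomial coefficient. -/
/-!
For `‖a‖ < 1 ≤ n`, the binomial series gives
`(n + a)⁻ˢ = ∑ᵢ (-1)ⁱ C(i+s-1, i) aⁱ n^{-(i+s)}`. The resulting double series over `(i, n)` is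
dominated by `C(i+s-1, i) ‖a‖ⁱ n⁻ˢ`, a product of two summable sequences when `s ≥ 2`, so it may
be summed in either order: summing over `n` first produces the coefficients `ζ(i+s)`, summing
over `i` first produces `ζ(s;a)` without its `n = 0` term `a⁻ˢ`.
-/

/-- Hurwitz zeta value `ζ(s;a) = ∑_{n≥0} 1/(n+a)^s`. -/
noncomputable def hzeta (s : ℕ) (a : ℂ) : ℂ :=
  ∑' n : ℕ, (((n : ℂ) + a) ^ s)⁻¹

/-- `ζ(s) = ∑_{n≥1} 1/n^s`. -/
noncomputable def zetaval (s : ℕ) : ℂ :=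
  ∑' n : ℕ, (((n : ℂ) + 1) ^ s)⁻¹

theorem hasSum_inv_add_pow {𝕜 : Type*} [NormedField 𝕜] [CompleteSpace 𝕜] (s : ℕ) {x a : 𝕜}
    (h : ‖a‖ < ‖x‖) :
    HasSum (fun i : ℕ => (-1) ^ i * ((i + s - 1).choose i : 𝕜) * a ^ i * (x ^ (i + s))⁻¹)
      ((x + a) ^ s)⁻¹ := by
  rcases s with _ | k
  · have hvanish : ∀ i ≠ 0, (-1) ^ i * ((i + 0 - 1).choose i : 𝕜) * a ^ i * (x ^ (i + 0))⁻¹ = 0 :=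
      fun i hi => by simp [Nat.choose_eq_zero_of_lt (show i - 1 < i by omega)]
    simpa using hasSum_single 0 hvanish
  have hx : x ≠ 0 := norm_pos_iff.mp ((norm_nonneg a).trans_lt h)
  have hr : ‖-a / x‖ < 1 := by
    rwa [norm_div, norm_neg, div_lt_one (norm_pos_iff.mpr hx)]
  have hsum := (hasSum_choose_mul_geometric_of_norm_lt_one k hr).mul_right (x ^ (k + 1))⁻¹
  rw [one_sub_div hx, sub_neg_eq_add, div_pow, one_div_div, div_mul_eq_mul_div,
    mul_inv_cancel₀ (pow_ne_zero _ hx), one_div] at hsum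
  refine hsum.congr_fun fun i => ?_
  rw [show i + (k + 1) - 1 = i + k by omega, Nat.choose_symm_add, div_pow, neg_pow, pow_add]
  field_simp
  rw [neg_pow a, one_pow]
  ring

theorem summable_inv_natCast_add_one_pow {t : ℕ} (ht : 2 ≤ t) :
    Summable (fun n : ℕ => (((n : ℝ) + 1) ^ t)⁻¹) := by
  simpa using (summable_nat_add_iff 1).2 (Real.summable_nat_pow_inv.2 ht)

theorem Complex.norm_natCast_add_one (n : ℕ) : ‖(n : ℂ) + 1‖ = n + 1 := by
  exact_mod_cast Complex.norm_natCast (n + 1)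

theorem hasSum_zetaval {t : ℕ} (ht : 2 ≤ t) :
    HasSum (fun n : ℕ => (((n : ℂ) + 1) ^ t)⁻¹) (zetaval t) := by
  refine Summable.hasSum (Summable.of_norm ?_)
  simpa [Complex.norm_natCast_add_one] using summable_inv_natCast_add_one_pow ht

theorem hzeta_eq_inv_pow_add {s : ℕ} {a T : ℂ}
    (h : HasSum (fun n : ℕ => (((n : ℂ) + 1 + a) ^ s)⁻¹) T) : hzeta s a = (a ^ s)⁻¹ + T := by
  have h' : HasSum (fun n : ℕ => ((((n + 1 : ℕ) : ℂ) + a) ^ s)⁻¹) T := by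
    refine h.congr_fun fun n => ?_
    rw [Nat.cast_succ]
  have hshift := (hasSum_nat_add_iff (f := fun n : ℕ => (((n : ℂ) + a) ^ s)⁻¹) 1).1 h'
  rw [hzeta, hshift.tsum_eq, Finset.sum_range_one, Nat.cast_zero, zero_add, add_comm]

noncomputable def hurwitzTerm (s : ℕ) (a : ℂ) (p : ℕ × ℕ) : ℂ :=
  (-1) ^ p.1 * ((p.1 + s - 1).choose p.1 : ℂ) * a ^ p.1 * (((p.2 : ℂ) + 1) ^ (p.1 + s))⁻¹

theorem norm_hurwitzTerm_le (s : ℕ) (a : ℂ) (p : ℕ × ℕ) :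
    ‖hurwitzTerm s a p‖ ≤ (p.1 + s - 1).choose p.1 * ‖a‖ ^ p.1 * (((p.2 : ℝ) + 1) ^ s)⁻¹ := by
  have hn : (1 : ℝ) ≤ p.2 + 1 := by linarith [p.2.cast_nonneg (α := ℝ)]
  simp only [hurwitzTerm, norm_mul, norm_pow, norm_inv, norm_neg, norm_one, one_pow, one_mul,
    Complex.norm_natCast, Complex.norm_natCast_add_one]
  gcongr
  omega

theorem summable_hurwitzTerm {s : ℕ} (hs : 2 ≤ s) {a : ℂ} (ha : ‖a‖ < 1) :
    Summable (hurwitzTerm s a) := by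
  have hgeom : Summable (fun i : ℕ => ((i + s - 1).choose i : ℝ) * ‖a‖ ^ i) := by
    refine (summable_choose_mul_geometric_of_norm_lt_one (s - 1) (r := ‖a‖) (by simpa)).congr
      fun i => ?_
    rw [show i + s - 1 = i + (s - 1) by omega, Nat.choose_symm_add]
  refine Summable.of_norm_bounded ?_ (norm_hurwitzTerm_le s a)
  exact hgeom.mul_of_nonneg (summable_inv_natCast_add_one_pow hs) (fun _ => by positivity)
    (fun _ => by positivity)

theorem hasSum_hurwitzTerm_row {s : ℕ} (a : ℂ) (i : ℕ) (h : 2 ≤ i + s) :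
    HasSum (fun n => hurwitzTerm s a (i, n))
      ((-1) ^ i * ((i + s - 1).choose i : ℂ) * zetaval (i + s) * a ^ i) := by
  rw [mul_right_comm _ (zetaval _)]
  exact (hasSum_zetaval h).mul_left ((-1) ^ i * ((i + s - 1).choose i : ℂ) * a ^ i)

theorem hasSum_hurwitzTerm_column (s : ℕ) {a : ℂ} (ha : ‖a‖ < 1) (n : ℕ) :
    HasSum (fun i => hurwitzTerm s a (i, n)) ((((n : ℂ) + 1 + a) ^ s)⁻¹) := by
  have hn : ‖a‖ < ‖(n : ℂ) + 1‖ := by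
    rw [Complex.norm_natCast_add_one]
    linarith [n.cast_nonneg (α := ℝ)]
  simpa only [hurwitzTerm] using hasSum_inv_add_pow s hn

theorem hurwitz_zeta_expansion_general (s : ℕ) (hs : 2 ≤ s) (a : ℂ)
    (ha1 : ‖a‖ < 1) :
    HasSum
      (fun i : ℕ => (-1 : ℂ) ^ i * (Nat.choose (i + s - 1) i : ℂ) * zetaval (i + s) * a ^ i)
      (hzeta s a - 1 / a ^ s) := by
  have hF := (summable_hurwitzTerm hs ha1).hasSum
  have hrows := hF.prod_fiberwise fun i => hasSum_hurwitzTerm_row a i (by omega)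
  have hcols := ((Equiv.prodComm ℕ ℕ).hasSum_iff.2 hF).prod_fiberwise
    (hasSum_hurwitzTerm_column s ha1)
  rw [hzeta_eq_inv_pow_add hcols, one_div, add_sub_cancel_left]
  exact hrows

/-- For `s ≥ 2` and `0 < |a| < 1`,
`ζ(s;a) = 1/a^s + ∑_{i≥1} (-1)^{i-1} C(i+s-2, i-1) ζ(i+s-1) a^{i-1}`,
the series on the right being convergent. -/
theorem hurwitz_zeta_expansion (s : ℕ) (hs : 2 ≤ s) (a : ℂ)
    (ha0 : a ≠ 0) (ha1 : ‖a‖ < 1) :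
    HasSum
      (fun i : ℕ => (-1 : ℂ) ^ i * (Nat.choose (i + s - 1) i : ℂ) * zetaval (i + s) * a ^ i)
      (hzeta s a - 1 / a ^ s) :=
  hurwitz_zeta_expansion_general s hs a ha1
end

section
/- Let p ≥ 2 and n ≥ 1 be integers and let z be a complex number with |z − (n − 1/2)| < 1/2. Then ∑_{k=0}^∞ 1/(k−z)^p = ∑_{i=p}^∞ C(i−1, p−1)·((−1)^i h_n^{(i)} + t̃(i))·(z − n + 1/2)^{i−p}, the series on the right being convergent; here C(n,r) denotes the binomial coefficient. -/
/-- The `n`-th odd harmonic number of order `p`: `h_n^{(p)} = ∑_{k=1}^n 1/(k-1/2)^p`. -/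
noncomputable def oddH (n p : ℕ) : ℂ :=
  ∑ k ∈ Finset.range n, (((k : ℂ) + 1/2) ^ p)⁻¹

/-- `t̃(s) = ∑_{n≥1} 1/(n-1/2)^s`. -/
noncomputable def ttilde (s : ℕ) : ℂ :=
  ∑' n : ℕ, (((n : ℂ) + 1/2) ^ s)⁻¹

/-!
Put `w = z - n + 1/2` and `a_k = k - n + 1/2`, so that `k - z = a_k - w` with
`|w| < 1/2 ≤ |a_k|`. Expanding each term by the binomial series
`(a_k - w)^{-p} = ∑_i C(i+p-1, p-1) a_k^{-(i+p)} w^i` gives a double series that is absolutely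
convergent, being dominated by `|a_k|^{-p} C(i+p-1, p-1) (2|w|)^i`. Summing it over `k` first,
the half-integers `a_k` with `k < n` contribute `(-1)^s h_n^{(s)}` to the coefficient of `w^i`,
`s = i + p`, and those with `k ≥ n` contribute `t̃(s)`.
-/

open Finset

theorem Summable.hasSum_swap_fiberwise {α β γ : Type*} [AddCommMonoid α]
    [TopologicalSpace α] [ContinuousAdd α] [T3Space α] {f : β × γ → α} {g : β → α} {h : γ → α}
    (hf : Summable f) (hg : ∀ b, HasSum (fun c ↦ f (b, c)) (g b))
    (hh : ∀ c, HasSum (fun b ↦ f (b, c)) (h c)) :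
    HasSum h (∑' b, g b) := by
  rw [(hf.hasSum.prod_fiberwise hg).tsum_eq]
  exact ((Equiv.prodComm γ β).hasSum_iff.mpr hf.hasSum).prod_fiberwise hh

theorem hasSum_choose_mul_inv_pow_mul_pow {𝕜 : Type*} [NormedField 𝕜] [CompleteSpace 𝕜]
    {p : ℕ} (hp : 1 ≤ p) {a w : 𝕜} (hw : ‖w‖ < ‖a‖) :
    HasSum (fun i : ℕ ↦ ((i + p - 1).choose (p - 1) : 𝕜) * (a ^ (i + p))⁻¹ * w ^ i)
      ((a - w) ^ p)⁻¹ := by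
  have ha : a ≠ 0 := norm_pos_iff.mp ((norm_nonneg w).trans_lt hw)
  have hwa : ‖w / a‖ < 1 := by rwa [norm_div, div_lt_one (norm_pos_iff.mpr ha)]
  have hgeom := (hasSum_choose_mul_geometric_of_norm_lt_one (p - 1) hwa).mul_left (a ^ p)⁻¹
  rw [Nat.sub_add_cancel hp] at hgeom
  have hlimit : (a ^ p)⁻¹ * (1 / (1 - w / a) ^ p) = ((a - w) ^ p)⁻¹ := by
    rw [one_div, ← mul_inv, ← mul_pow, mul_sub, mul_one, mul_div_cancel₀ w ha]
  rw [hlimit] at hgeom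
  refine hgeom.congr_fun fun i ↦ ?_
  rw [Nat.add_sub_assoc hp, div_pow, pow_add]
  field_simp

theorem summable_choose_mul_inv_pow_mul_pow {𝕜 ι : Type*} [RCLike 𝕜] {p : ℕ} (hp : 1 ≤ p)
    {a : ι → 𝕜} {w : 𝕜} {ρ : ℝ} (hρ : 0 < ρ) (ha : ∀ k, ρ ≤ ‖a k‖) (hw : ‖w‖ < ρ)
    (hsum : Summable fun k ↦ (‖a k‖ ^ p)⁻¹) :
    Summable fun q : ι × ℕ ↦
      ((q.2 + p - 1).choose (p - 1) : 𝕜) * (a q.1 ^ (q.2 + p))⁻¹ * w ^ q.2 := by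
  set r := ‖w‖ / ρ
  have hr : ‖r‖ < 1 := by
    rwa [Real.norm_of_nonneg (by positivity), div_lt_one hρ]
  refine Summable.of_norm_bounded
    (hsum.mul_of_nonneg (summable_choose_mul_geometric_of_norm_lt_one (p - 1) hr)
      (fun k ↦ by positivity) (fun i ↦ by positivity)) ?_
  rintro ⟨k, i⟩
  have hak : 0 < ‖a k‖ := hρ.trans_le (ha k)
  have hratio : ‖w‖ / ‖a k‖ ≤ r := div_le_div_of_nonneg_left (norm_nonneg w) hρ (ha k)
  calc ‖((i + p - 1).choose (p - 1) : 𝕜) * (a k ^ (i + p))⁻¹ * w ^ i‖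
      = (‖a k‖ ^ p)⁻¹ * ((i + (p - 1)).choose (p - 1) * (‖w‖ / ‖a k‖) ^ i) := by
        rw [Nat.add_sub_assoc hp, norm_mul, norm_mul, norm_inv, norm_pow, norm_pow,
          RCLike.norm_natCast, div_pow, pow_add]
        field_simp
    _ ≤ (‖a k‖ ^ p)⁻¹ * ((i + (p - 1)).choose (p - 1) * r ^ i) := by gcongr

theorem summable_inv_natCast_add_half_pow {s : ℕ} (hs : 1 < s) :
    Summable fun m : ℕ ↦ (((m : ℂ) + 1/2) ^ s)⁻¹ := by
  rw [← summable_norm_iff]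
  refine ((Real.summable_one_div_nat_add_rpow (1/2) s).mpr (by exact_mod_cast hs)).congr
    fun m ↦ ?_
  have hcast : (m : ℂ) + 1/2 = ((m + 1/2 : ℝ) : ℂ) := by push_cast; ring
  rw [hcast, norm_inv, norm_pow, Complex.norm_real, Real.norm_eq_abs, Real.rpow_natCast,
    one_div]

theorem sum_range_inv_natCast_sub_add_half_pow (n s : ℕ) :
    ∑ k ∈ range n, (((k : ℂ) - n + 1/2) ^ s)⁻¹ = (-1) ^ s * oddH n s := by
  rw [← sum_range_reflect, oddH, mul_sum]
  refine sum_congr rfl fun k hk ↦ ?_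
  have hk : k < n := mem_range.mp hk
  have hreflect : ((n - 1 - k : ℕ) : ℂ) - n + 1/2 = -((k : ℂ) + 1/2) := by
    rw [Nat.cast_sub (by omega), Nat.cast_sub (by omega)]
    push_cast
    ring
  rw [hreflect, neg_pow, mul_inv, ← inv_pow, inv_neg, inv_one]

theorem hasSum_inv_natCast_sub_add_half_pow (n : ℕ) {s : ℕ} (hs : 1 < s) :
    HasSum (fun k : ℕ ↦ (((k : ℂ) - n + 1/2) ^ s)⁻¹) ((-1) ^ s * oddH n s + ttilde s) := by
  rw [← sum_range_inv_natCast_sub_add_half_pow, add_comm]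
  refine (hasSum_nat_add_iff n).mp ((summable_inv_natCast_add_half_pow hs).hasSum.congr_fun
    fun m ↦ ?_)
  push_cast
  ring_nf

theorem half_le_norm_natCast_sub_add_half (k n : ℕ) : 1/2 ≤ ‖(k : ℂ) - n + 1/2‖ := by
  have hcast : (k : ℂ) - n + 1/2 = ((k - n + 1/2 : ℝ) : ℂ) := by push_cast; ring
  rw [hcast, Complex.norm_real, Real.norm_eq_abs, le_abs]
  rcases le_or_gt n k with h | h
  · have : (n : ℝ) ≤ k := by exact_mod_cast h
    left; linarith
  · have : (k : ℝ) + 1 ≤ n := by exact_mod_cast h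
    right; linarith

theorem psi_expansion_at_half_integers_general (p n : ℕ) (hp : 2 ≤ p) (z : ℂ)
    (hz : ‖z - ((n : ℂ) - 1/2)‖ < 1/2) :
    HasSum
      (fun i : ℕ => (Nat.choose (i + p - 1) (p - 1) : ℂ) *
        ((-1 : ℂ) ^ (i + p) * oddH n (i + p) + ttilde (i + p)) *
        (z - (n : ℂ) + 1/2) ^ i)
      (∑' k : ℕ, (((k : ℂ) - z) ^ p)⁻¹) := by
  set w := z - n + 1/2
  set a : ℕ → ℂ := fun k ↦ (k : ℂ) - n + 1/2
  have hw : ‖w‖ < 1/2 := by convert hz using 2; ring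
  have ha : ∀ k, 1/2 ≤ ‖a k‖ := fun k ↦ half_le_norm_natCast_sub_add_half k n
  have hsum : Summable fun k ↦ (‖a k‖ ^ p)⁻¹ := by
    simpa only [norm_inv, norm_pow] using (hasSum_inv_natCast_sub_add_half_pow n hp).summable.norm
  have hF := summable_choose_mul_inv_pow_mul_pow (by omega) (by norm_num) ha hw hsum
  refine hF.hasSum_swap_fiberwise (fun k ↦ ?_) (fun i ↦ ?_)
  · have hk := hasSum_choose_mul_inv_pow_mul_pow (p := p) (by omega) (hw.trans_le (ha k))
    rwa [show a k - w = k - z by ring] at hk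
  · exact ((hasSum_inv_natCast_sub_add_half_pow n (s := i + p) (by omega)).mul_left
      ((i + p - 1).choose (p - 1) : ℂ)).mul_right (w ^ i)

/-- For `p ≥ 2`, `n ≥ 1` and `|z - (n - 1/2)| < 1/2`,
`∑_{k≥0} 1/(k-z)^p = ∑_{i≥p} C(i-1, p-1) ((-1)^i h_n^{(i)} + t̃(i)) (z-n+1/2)^{i-p}`,
the series on the right being convergent. -/
theorem psi_expansion_at_half_integers (p n : ℕ) (hp : 2 ≤ p) (hn : 1 ≤ n) (z : ℂ)
    (hz : ‖z - ((n : ℂ) - 1/2)‖ < 1/2) :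
    HasSum
      (fun i : ℕ => (Nat.choose (i + p - 1) (p - 1) : ℂ) *
        ((-1 : ℂ) ^ (i + p) * oddH n (i + p) + ttilde (i + p)) *
        (z - (n : ℂ) + 1/2) ^ i)
      (∑' k : ℕ, (((k : ℂ) - z) ^ p)⁻¹) :=
  psi_expansion_at_half_integers_general p n hp z hz
end
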